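/- If a graph G of order n has a near-perfect matching (a matching leaving exactly one vertex unmatched) and ν(G) ≥ γ_h(G), then γ_{rh}(G) ≤ 2n·(ln(δ_h + 1) + 1)/(δ_h + 1) + 1. -/

import Mathlib

open Finset

noncomputable section
open scoped Classical

variable {n : ℕ}

/-- The set of vertices at distance exactly 2 from `i`. -/
def N2 (G : SimpleGraph (Fin n)) (i : Fin n) : Finset (Fin n) :=
  Finset.univ.filter (fun j => G.dist i j = 2)

/-- The neighborhood of `i`. -/
def Nbr (G : SimpleGraph (Fin n)) (i : Fin n) : Finset (Fin n) :=
  Finset.univ.filter (fun j => G.Adj i j)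

/-- Hop degree of a vertex. -/
def hopDeg (G : SimpleGraph (Fin n)) (i : Fin n) : ℕ := (N2 G i).card

/-- Minimum hop degree. -/
def minHopDeg (G : SimpleGraph (Fin n)) : ℕ := ⨅ i, hopDeg G i

/-- Minimum degree. -/
def minDeg (G : SimpleGraph (Fin n)) : ℕ := ⨅ i, (Nbr G i).card

def IsHopDomSet (G : SimpleGraph (Fin n)) (S : Finset (Fin n)) : Prop :=
  ∀ u, u ∉ S → ∃ v ∈ S, G.dist u v = 2

def IsTwoStepDomSet (G : SimpleGraph (Fin n)) (S : Finset (Fin n)) : Prop :=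
  ∀ u : Fin n, ∃ v ∈ S, G.dist u v = 2

def IsRestrainedHopDomSet (G : SimpleGraph (Fin n)) (S : Finset (Fin n)) : Prop :=
  IsHopDomSet G S ∧ ∀ u, u ∉ S → ∃ v, v ∉ S ∧ G.Adj u v

def IsTotalRestrainedHopDomSet (G : SimpleGraph (Fin n)) (S : Finset (Fin n)) : Prop :=
  IsTwoStepDomSet G S ∧ ∀ u, u ∉ S → ∃ v, v ∉ S ∧ G.Adj u v

def IsTwoStepRestrainedDomSet (G : SimpleGraph (Fin n)) (S : Finset (Fin n)) : Prop :=
  IsHopDomSet G S ∧ ∀ u, u ∉ S → ∃ v, v ∉ S ∧ G.dist u v = 2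

def IsTotalTwoStepRestrainedDomSet (G : SimpleGraph (Fin n)) (S : Finset (Fin n)) : Prop :=
  IsTwoStepDomSet G S ∧ ∀ u, u ∉ S → ∃ v, v ∉ S ∧ G.dist u v = 2

def hopDomNum (G : SimpleGraph (Fin n)) : ℕ :=
  sInf {k | ∃ S : Finset (Fin n), IsHopDomSet G S ∧ S.card = k}

def twoStepDomNum (G : SimpleGraph (Fin n)) : ℕ :=
  sInf {k | ∃ S : Finset (Fin n), IsTwoStepDomSet G S ∧ S.card = k}

def rhDomNum (G : SimpleGraph (Fin n)) : ℕ :=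
  sInf {k | ∃ S : Finset (Fin n), IsRestrainedHopDomSet G S ∧ S.card = k}

def trhDomNum (G : SimpleGraph (Fin n)) : ℕ :=
  sInf {k | ∃ S : Finset (Fin n), IsTotalRestrainedHopDomSet G S ∧ S.card = k}

def tsrDomNum (G : SimpleGraph (Fin n)) : ℕ :=
  sInf {k | ∃ S : Finset (Fin n), IsTwoStepRestrainedDomSet G S ∧ S.card = k}

def ttsrDomNum (G : SimpleGraph (Fin n)) : ℕ :=
  sInf {k | ∃ S : Finset (Fin n), IsTotalTwoStepRestrainedDomSet G S ∧ S.card = k}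

/-- The graph `Dist(G;2)` joining vertices at distance exactly 2 in `G`. -/
def dist2Graph (G : SimpleGraph (Fin n)) : SimpleGraph (Fin n) where
  Adj u v := u ≠ v ∧ G.dist u v = 2
  symm := by
    constructor
    intro u v h
    exact ⟨h.1.symm, by rw [SimpleGraph.dist_comm]; exact h.2⟩
  loopless := ⟨fun v h => h.1 rfl⟩

def domNum (H : SimpleGraph (Fin n)) : ℕ :=
  sInf {k | ∃ S : Finset (Fin n), (∀ u, u ∉ S → ∃ v ∈ S, H.Adj u v) ∧ S.card = k}

def totalDomNum (H : SimpleGraph (Fin n)) : ℕ :=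
  sInf {k | ∃ S : Finset (Fin n), (∀ u : Fin n, ∃ v ∈ S, H.Adj u v) ∧ S.card = k}

/-- Matching number: maximum number of edges in a matching. -/
def matchingNum (G : SimpleGraph (Fin n)) : ℕ :=
  sSup {k | ∃ M : SimpleGraph.Subgraph G, M.IsMatching ∧ M.edgeSet.ncard = k}

/-- A hop matching: a set of paths of length two, no two of which share an end vertex. -/
def IsHopMatching (G : SimpleGraph (Fin n)) (H : Finset (Fin n × Fin n × Fin n)) : Prop :=
  (∀ t ∈ H, G.Adj t.1 t.2.1 ∧ G.Adj t.2.1 t.2.2 ∧ t.1 ≠ t.2.2) ∧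
  ∀ t ∈ H, ∀ t' ∈ H, t ≠ t' →
    t.1 ≠ t'.1 ∧ t.1 ≠ t'.2.2 ∧ t.2.2 ≠ t'.1 ∧ t.2.2 ≠ t'.2.2

/-- Hop matching number. -/
def hopMatchingNum (G : SimpleGraph (Fin n)) : ℕ :=
  sSup {k | ∃ H : Finset (Fin n × Fin n × Fin n), IsHopMatching G H ∧ H.card = k}

def frh (G : SimpleGraph (Fin n)) (p : Fin n → ℝ) : ℝ :=
  (∑ i, p i) + (∑ i, (1 - p i) * ∏ j ∈ N2 G i, (1 - p j)) +
  ∑ i, (1 - p i) * (1 - (1 - p i) * ∏ j ∈ N2 G i, (1 - p j)) *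
    ∏ j ∈ Nbr G i, (p j + (1 - p j) * ∏ k ∈ N2 G j, (1 - p k))

def f2sr (G : SimpleGraph (Fin n)) (p : Fin n → ℝ) : ℝ :=
  (∑ i, p i) + (∑ i, (1 - p i) * ∏ j ∈ N2 G i, (1 - p j)) +
  ∑ i, (1 - p i) * (1 - (1 - p i) * ∏ j ∈ N2 G i, (1 - p j)) *
    ∏ j ∈ N2 G i, (p j + (1 - p j) * ∏ k ∈ N2 G j, (1 - p k))

def ZSet (G : SimpleGraph (Fin n)) (X : Finset (Fin n)) : Finset (Fin n) :=
  Finset.univ.filter (fun i => i ∉ X ∧ N2 G i ∩ X = ∅)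

def YSet (G : SimpleGraph (Fin n)) (X : Finset (Fin n)) : Finset (Fin n) :=
  Finset.univ.filter (fun i => i ∉ X ∪ ZSet G X ∧ Nbr G i ⊆ X ∪ ZSet G X)

def DSet (G : SimpleGraph (Fin n)) (X : Finset (Fin n)) : Finset (Fin n) :=
  X ∪ ZSet G X ∪ YSet G X


/-!
Take a minimum hop dominating set `D` and add the matching partners of its vertices and the
unmatched vertex. A vertex outside the resulting set `S` is matched, and its partner lies outside
`S` as well, so `S` is restrained: `γ_rh ≤ 2 γ_h + 1`.

For `γ_h`, choose a random set `X` containing each vertex independently with probability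
`p = log (δ_h + 1) / (δ_h + 1)` and add the set `Z` of vertices whose closed hop neighbourhood
misses `X`. Then `X ∪ Z` is hop dominating, of expected size at most
`n p + n (1 - p) ^ (δ_h + 1) ≤ n p + n e^{-p (δ_h + 1)} = n (log (δ_h + 1) + 1) / (δ_h + 1)`.
-/

lemma Finset.sum_mul_card_filter {α β R : Type*} [Fintype α] [Fintype β] [NonAssocSemiring R]
    (f : α → R) (P : α → β → Prop) [∀ a b, Decidable (P a b)] :
    ∑ a, f a * #{b | P a b} = ∑ b, ∑ a with P a b, f a := by
  simp only [Finset.card_filter, Nat.cast_sum, Finset.mul_sum, Finset.sum_filter]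
  rw [Finset.sum_comm]
  simp

section RandomSubset

variable {V : Type*} [Fintype V] [DecidableEq V]

/-- The probability that a random subset, containing each element independently with
probability `p`, equals `t`. -/
def bernoulliWeight (p : ℝ) (t : Finset V) : ℝ := p ^ #t * (1 - p) ^ #tᶜ

lemma bernoulliWeight_nonneg {p : ℝ} (hp0 : 0 ≤ p) (hp1 : p ≤ 1) (t : Finset V) :
    0 ≤ bernoulliWeight p t :=
  mul_nonneg (pow_nonneg hp0 _) (pow_nonneg (sub_nonneg.2 hp1) _)

lemma sum_bernoulliWeight_filter_disjoint (p : ℝ) (A : Finset V) :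
    ∑ t with Disjoint t A, bernoulliWeight p t = (1 - p) ^ #A := by
  have h := Fintype.prod_add (fun i => if i ∈ A then (0 : ℝ) else p) (fun _ => 1 - p)
  rw [Finset.sum_filter]
  convert h.symm using 1
  · refine Finset.sum_congr rfl fun t _ => ?_
    rw [Finset.prod_const, bernoulliWeight]
    by_cases hdisj : Disjoint t A
    · rw [if_pos hdisj,
        Finset.prod_congr rfl fun a ha => if_neg (Finset.disjoint_left.1 hdisj ha)]
      simp
    · obtain ⟨a, hat, haA⟩ := Finset.not_disjoint_iff.1 hdisj
      rw [if_neg hdisj, Finset.prod_eq_zero hat (by simp [haA]), zero_mul]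
  · simp only [apply_ite (· + (1 - p)), zero_add]
    simp

lemma sum_bernoulliWeight (p : ℝ) : ∑ t : Finset V, bernoulliWeight p t = 1 := by
  simpa using sum_bernoulliWeight_filter_disjoint p (∅ : Finset V)

lemma sum_bernoulliWeight_filter_mem (p : ℝ) (i : V) :
    ∑ t with i ∈ t, bernoulliWeight p t = p := by
  have h := Finset.sum_filter_add_sum_filter_not Finset.univ (i ∈ ·) (bernoulliWeight p)
  simp only [← Finset.disjoint_singleton_right] at h
  rw [sum_bernoulliWeight, sum_bernoulliWeight_filter_disjoint, Finset.card_singleton,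
    pow_one] at h
  linarith

lemma exists_le_of_sum_bernoulliWeight_mul_le {p B : ℝ} (hp0 : 0 ≤ p) (hp1 : p ≤ 1)
    (X : Finset V → ℝ) (h : ∑ t, bernoulliWeight p t * X t ≤ B) : ∃ t, X t ≤ B := by
  by_contra! hX
  obtain ⟨t, ht⟩ : ∃ t : Finset V, 0 < bernoulliWeight p t := by
    by_contra! hw
    have := Finset.sum_nonpos fun t (_ : t ∈ Finset.univ) => hw t
    rw [sum_bernoulliWeight] at this
    linarith
  have : ∑ t, bernoulliWeight p t * B < ∑ t, bernoulliWeight p t * X t :=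
    Finset.sum_lt_sum
      (fun s _ => mul_le_mul_of_nonneg_left (hX s).le (bernoulliWeight_nonneg hp0 hp1 s))
      ⟨t, Finset.mem_univ t, mul_lt_mul_of_pos_left (hX t) ht⟩
  rw [← Finset.sum_mul, sum_bernoulliWeight, one_mul] at this
  linarith

end RandomSubset

lemma one_sub_log_div_pow_le {D : ℕ} (hD : 0 < D) : (1 - Real.log D / D) ^ D ≤ 1 / D := by
  have hD' : (0 : ℝ) < D := by exact_mod_cast hD
  calc (1 - Real.log D / D) ^ D ≤ Real.exp (-Real.log D) :=
        Real.one_sub_div_pow_le_exp_neg (Real.log_le_self hD'.le)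
    _ = 1 / D := by rw [Real.exp_neg, Real.exp_log hD', one_div]

lemma IsHopDomSet.mono {G : SimpleGraph (Fin n)} {S T : Finset (Fin n)} (hS : IsHopDomSet G S)
    (hST : S ⊆ T) : IsHopDomSet G T := fun u hu =>
  let ⟨v, hv, huv⟩ := hS u fun h => hu (hST h)
  ⟨v, hST hv, huv⟩

lemma hopDomNum_le_card {G : SimpleGraph (Fin n)} {S : Finset (Fin n)} (hS : IsHopDomSet G S) :
    hopDomNum G ≤ #S :=
  Nat.sInf_le ⟨S, hS, rfl⟩

lemma exists_isHopDomSet_card_eq_hopDomNum (G : SimpleGraph (Fin n)) :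
    ∃ S, IsHopDomSet G S ∧ #S = hopDomNum G :=
  Nat.sInf_mem (s := {k | ∃ S, IsHopDomSet G S ∧ #S = k})
    ⟨n, Finset.univ, fun u hu => absurd (Finset.mem_univ u) hu, by simp⟩

lemma rhDomNum_le_card {G : SimpleGraph (Fin n)} {S : Finset (Fin n)}
    (hS : IsRestrainedHopDomSet G S) : rhDomNum G ≤ #S :=
  Nat.sInf_le ⟨S, hS, rfl⟩

lemma card_insert_N2 (G : SimpleGraph (Fin n)) (i : Fin n) :
    #(insert i (N2 G i)) = hopDeg G i + 1 :=
  Finset.card_insert_of_notMem (by simp [N2])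

lemma minHopDeg_le_hopDeg (G : SimpleGraph (Fin n)) (i : Fin n) : minHopDeg G ≤ hopDeg G i :=
  ciInf_le (OrderBot.bddBelow _) i

lemma mem_ZSet_iff_disjoint (G : SimpleGraph (Fin n)) (X : Finset (Fin n)) (i : Fin n) :
    i ∈ ZSet G X ↔ Disjoint X (insert i (N2 G i)) := by
  simp [ZSet, Finset.disjoint_insert_right, ← Finset.disjoint_iff_inter_eq_empty, disjoint_comm]

lemma isHopDomSet_union_ZSet (G : SimpleGraph (Fin n)) (X : Finset (Fin n)) :
    IsHopDomSet G (X ∪ ZSet G X) := by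
  intro u hu
  obtain ⟨v, hv⟩ : (N2 G u ∩ X).Nonempty := by
    rw [Finset.nonempty_iff_ne_empty]
    simp_all [ZSet]
  rw [Finset.mem_inter, N2, Finset.mem_filter] at hv
  exact ⟨v, Finset.mem_union_left _ hv.2, hv.1.2⟩

lemma exists_card_add_card_ZSet_le (G : SimpleGraph (Fin n)) {p : ℝ} (hp0 : 0 ≤ p)
    (hp1 : p ≤ 1) :
    ∃ X, (#X : ℝ) + #(ZSet G X) ≤ n * p + n * (1 - p) ^ (minHopDeg G + 1) := by
  refine exists_le_of_sum_bernoulliWeight_mul_le hp0 hp1 (fun X : Finset (Fin n) => _) ?_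
  have hX : ∑ t : Finset (Fin n), bernoulliWeight p t * #t = n * p := by
    have h := Finset.sum_mul_card_filter (bernoulliWeight p) fun (t : Finset (Fin n)) i => i ∈ t
    simpa [Finset.filter_univ_mem, sum_bernoulliWeight_filter_mem] using h
  have hZ : ∑ t : Finset (Fin n), bernoulliWeight p t * #(ZSet G t) ≤
      n * (1 - p) ^ (minHopDeg G + 1) := by
    have hZt (t : Finset (Fin n)) :
        ZSet G t = ({i | Disjoint t (insert i (N2 G i))} : Finset (Fin n)) := by
      ext i
      simp [mem_ZSet_iff_disjoint]
    calc ∑ t, bernoulliWeight p t * #(ZSet G t) = ∑ i, (1 - p) ^ #(insert i (N2 G i)) := by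
          simp_rw [hZt, Finset.sum_mul_card_filter, sum_bernoulliWeight_filter_disjoint]
      _ ≤ ∑ _i : Fin n, (1 - p) ^ (minHopDeg G + 1) := by
          refine Finset.sum_le_sum fun i _ => ?_
          rw [card_insert_N2]
          exact pow_le_pow_of_le_one (by linarith) (by linarith)
            (Nat.succ_le_succ (minHopDeg_le_hopDeg G i))
      _ = n * (1 - p) ^ (minHopDeg G + 1) := by simp
  simp only [mul_add, Finset.sum_add_distrib]
  linarith

theorem hopDomNum_le_mul_log_div (G : SimpleGraph (Fin n)) :
    (hopDomNum G : ℝ) ≤ n * (Real.log (minHopDeg G + 1) + 1) / (minHopDeg G + 1) := by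
  set D := minHopDeg G + 1
  have hD0 : (0 : ℝ) < D := by positivity
  set p := Real.log D / D
  have hp0 : 0 ≤ p := div_nonneg (Real.log_nonneg (by simp [D])) hD0.le
  have hp1 : p ≤ 1 := (div_le_one hD0).2 (Real.log_le_self hD0.le)
  obtain ⟨X, hX⟩ := exists_card_add_card_ZSet_le G hp0 hp1
  calc (hopDomNum G : ℝ) ≤ #(X ∪ ZSet G X) :=
        mod_cast hopDomNum_le_card (isHopDomSet_union_ZSet G X)
    _ ≤ #X + #(ZSet G X) := mod_cast Finset.card_union_le _ _
    _ ≤ n * p + n * (1 - p) ^ D := hX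
    _ ≤ n * p + n * (1 / D) := by gcongr; exact one_sub_log_div_pow_le (by omega)
    _ = n * (Real.log (minHopDeg G + 1) + 1) / (minHopDeg G + 1) := by
      simp only [p, D]; push_cast; field_simp

lemma SimpleGraph.Subgraph.IsMatching.exists_superset_card_le {V : Type*} [Fintype V]
    {G : SimpleGraph V} {M : G.Subgraph} (hM : M.IsMatching) (D : Finset V) :
    ∃ S, D ⊆ S ∧ #S ≤ 2 * #D + #{v | v ∉ M.verts} ∧
      ∀ u, u ∉ S → ∃ v, v ∉ S ∧ G.Adj u v := by
  set P : Finset V := {w | ∃ d ∈ D, M.Adj w d}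
  set U : Finset V := {v | v ∉ M.verts}
  have hP : #P ≤ #D := by
    refine Finset.card_le_card_of_forall_subsingleton M.Adj (fun w hw => by simpa [P] using hw) ?_
    intro d _ w₁ hw₁ w₂ hw₂
    obtain ⟨w, -, hw⟩ := hM (M.edge_vert hw₁.2.symm)
    exact (hw w₁ hw₁.2.symm).trans (hw w₂ hw₂.2.symm).symm
  refine ⟨D ∪ P ∪ U, fun d hd => by simp [hd], ?_, ?_⟩
  · calc #(D ∪ P ∪ U) ≤ #D + #P + #U :=
          (Finset.card_union_le _ _).trans (by gcongr; exact Finset.card_union_le _ _)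
      _ ≤ 2 * #D + #U := by omega
  · intro u hu
    simp only [Finset.mem_union, Finset.mem_filter, Finset.mem_univ, true_and, not_or, not_not,
      P, U] at hu ⊢
    obtain ⟨⟨huD, huP⟩, huM⟩ := hu
    obtain ⟨w, huw, -⟩ := hM huM
    have hwM : w ∈ M.verts := M.edge_vert huw.symm
    refine ⟨w, ⟨⟨fun hwD => huP ⟨w, hwD, huw⟩, ?_⟩, hwM⟩, M.adj_sub huw⟩
    -- `w` has a single partner, namely `u`
    rintro ⟨d, hdD, hwd⟩
    obtain ⟨x, -, hx⟩ := hM hwM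
    exact huD ((hx d hwd).trans (hx u huw.symm).symm ▸ hdD)

lemma rhDomNum_le_of_isMatching (G : SimpleGraph (Fin n)) {M : G.Subgraph} (hM : M.IsMatching) :
    rhDomNum G ≤ 2 * hopDomNum G + #{v | v ∉ M.verts} := by
  obtain ⟨D, hD, hDcard⟩ := exists_isHopDomSet_card_eq_hopDomNum G
  obtain ⟨S, hDS, hScard, hS⟩ := hM.exists_superset_card_le D
  rw [← hDcard]
  exact (rhDomNum_le_card ⟨hD.mono hDS, hS⟩).trans hScard

theorem stmt6_general {n : ℕ} (G : SimpleGraph (Fin n))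
    (hnpm : ∃ M : SimpleGraph.Subgraph G, M.IsMatching ∧ ∃ v : Fin n, M.verts = {v}ᶜ) :
    (rhDomNum G : ℝ) ≤
      2 * n * (Real.log (minHopDeg G + 1) + 1) / (minHopDeg G + 1) + 1 := by
  obtain ⟨M, hM, v, hv⟩ := hnpm
  have hrh : rhDomNum G ≤ 2 * hopDomNum G + 1 := by
    simpa [hv, Finset.filter_eq'] using rhDomNum_le_of_isMatching G hM
  calc (rhDomNum G : ℝ) ≤ 2 * hopDomNum G + 1 := mod_cast hrh
    _ ≤ 2 * (n * (Real.log (minHopDeg G + 1) + 1) / (minHopDeg G + 1)) + 1 := by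
      gcongr; exact hopDomNum_le_mul_log_div G
    _ = 2 * n * (Real.log (minHopDeg G + 1) + 1) / (minHopDeg G + 1) + 1 := by ring

theorem stmt6 {n : ℕ} (G : SimpleGraph (Fin n)) (hδh : 1 ≤ minHopDeg G)
    (hnpm : ∃ M : SimpleGraph.Subgraph G, M.IsMatching ∧ ∃ v : Fin n, M.verts = {v}ᶜ)
    (hν : hopDomNum G ≤ matchingNum G) :
    (rhDomNum G : ℝ) ≤
      2 * n * (Real.log (minHopDeg G + 1) + 1) / (minHopDeg G + 1) + 1 :=
  stmt6_general G hnpm
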